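/- Let d ≥ 1, h > 0, and let u, χ : ℝ^d → [0,1] be measurable and Lebesgue integrable. Then ∫_{ℝ^d} (G_{h/2} ⋆ (u − χ))² dx + ( ∫_{ℝ^d} u dx − ∫_{ℝ^d} u·(G_h ⋆ u) dx ) = ∫_{ℝ^d} u·(1 − 2·(G_h ⋆ χ)) dx + ∫_{ℝ^d} χ·(G_h ⋆ χ) dx. -/

import Mathlib

/-!
Expanding the square reduces the identity to `∫ (G_{h/2} ⋆ f)² = ∫ f (G_h ⋆ f)` for `f = u - χ`
and to the symmetry `∫ u (G_h ⋆ χ) = ∫ χ (G_h ⋆ u)`. Both are Fubini arguments for an even,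
bounded, integrable kernel, the first combined with the semigroup law `G_{h/2} ⋆ G_{h/2} = G_h`,
which comes from completing the square in the exponent.
-/

open MeasureTheory

/-- The Gaussian heat kernel `G_h(z) = (2πh)^{-d/2} exp(-|z|²/(2h))` on `ℝ^d`. -/
noncomputable def gauss (d : ℕ) (h : ℝ) (z : EuclideanSpace ℝ (Fin d)) : ℝ :=
  (2 * Real.pi * h) ^ (-(d : ℝ) / 2) * Real.exp (-‖z‖ ^ 2 / (2 * h))

/-- Convolution of two functions on `ℝ^d` w.r.t. Lebesgue measure. -/
noncomputable def conv (d : ℕ) (f g : EuclideanSpace ℝ (Fin d) → ℝ)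
    (x : EuclideanSpace ℝ (Fin d)) : ℝ :=
  ∫ y, f (x - y) * g y

section Convolution

variable {d : ℕ} {K L f φ : EuclideanSpace ℝ (Fin d) → ℝ} {C : ℝ}

local notation "E" => EuclideanSpace ℝ (Fin d)

lemma integrable_conv_integrand (hK : Measurable K) (hKb : ∀ z, ‖K z‖ ≤ C) (hf : Integrable f)
    (x : E) : Integrable fun y => K (x - y) * f y :=
  hf.bdd_mul (hK.comp (measurable_const.sub measurable_id)).aestronglyMeasurable
    (ae_of_all _ fun y => hKb (x - y))

lemma conv_sub {g : E → ℝ} (hK : Measurable K) (hKb : ∀ z, ‖K z‖ ≤ C) (hf : Integrable f)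
    (hg : Integrable g) (x : E) :
    conv d K (fun y => f y - g y) x = conv d K f x - conv d K g x := by
  simp only [conv, mul_sub]
  exact integral_sub (integrable_conv_integrand hK hKb hf x) (integrable_conv_integrand hK hKb hg x)

lemma integrable_kernel_prod (hK : Integrable K) (hf : Integrable f) :
    Integrable (fun p : E × E => K (p.1 - p.2) * f p.2) (volume.prod volume) := by
  have := (measurePreserving_sub_prod (volume : Measure E) volume).integrable_comp_of_integrable
    (hK.mul_prod hf)
  simpa [Function.comp_def] using this

lemma integrable_conv (hK : Integrable K) (hf : Integrable f) : Integrable (conv d K f) :=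
  (integrable_kernel_prod hK hf).integral_prod_left

lemma norm_conv_le (hKb : ∀ z, ‖K z‖ ≤ C) (hf : Integrable f) (x : E) :
    ‖conv d K f x‖ ≤ C * ∫ y, ‖f y‖ :=
  calc ‖conv d K f x‖ ≤ ∫ y, ‖K (x - y) * f y‖ := norm_integral_le_integral_norm _
    _ ≤ ∫ y, C * ‖f y‖ := by
        refine integral_mono_of_nonneg (ae_of_all _ fun y => norm_nonneg _)
          (hf.norm.const_mul C) (ae_of_all _ fun y => ?_)
        simp only [norm_mul]
        exact mul_le_mul_of_nonneg_right (hKb _) (norm_nonneg _)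
    _ = C * ∫ y, ‖f y‖ := integral_const_mul _ _

lemma MeasureTheory.Integrable.mul_conv (hφ : Integrable φ) (hK : Integrable K)
    (hKb : ∀ z, ‖K z‖ ≤ C) (hf : Integrable f) : Integrable fun x => φ x * conv d K f x :=
  hφ.mul_bdd (integrable_conv hK hf).aestronglyMeasurable (ae_of_all _ (norm_conv_le hKb hf))

lemma integrable_mul_kernel_mul (hφ : Integrable φ) (hK : Measurable K) (hKb : ∀ z, ‖K z‖ ≤ C)
    (hf : Integrable f) :
    Integrable (fun p : E × E => φ p.1 * (K (p.1 - p.2) * f p.2)) (volume.prod volume) := by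
  have := (hφ.mul_prod hf).bdd_mul
    (hK.comp (measurable_fst.sub measurable_snd)).aestronglyMeasurable
    (ae_of_all _ fun p => hKb (p.1 - p.2))
  refine this.congr (ae_of_all _ fun p => ?_)
  simp only [Function.comp_apply, Pi.sub_apply]
  ring

lemma integral_mul_conv_comm (hK_even : ∀ z, K (-z) = K z) (hK : Measurable K)
    (hKb : ∀ z, ‖K z‖ ≤ C) (hφ : Integrable φ) (hf : Integrable f) :
    ∫ x, φ x * conv d K f x = ∫ y, f y * conv d K φ y := by
  have hF := integrable_mul_kernel_mul hφ hK hKb hf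
  calc ∫ x, φ x * conv d K f x = ∫ x, ∫ y, φ x * (K (x - y) * f y) := by
        simp only [conv, integral_const_mul]
    _ = ∫ y, ∫ x, φ x * (K (x - y) * f y) := integral_integral_swap hF
    _ = ∫ y, f y * conv d K φ y := by
        simp only [conv, ← integral_const_mul]
        congr 1 with y
        congr 1 with x
        rw [← hK_even, neg_sub]
        ring

lemma conv_conv (hK : Measurable K) (hKb : ∀ z, ‖K z‖ ≤ C) (hL : Integrable L)
    (hf : Integrable f) (x : E) :
    conv d K (conv d L f) x = conv d (conv d K L) f x := by
  have hF : Integrable (fun p : E × E => K (x - p.1) * (L (p.1 - p.2) * f p.2))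
      (volume.prod volume) :=
    (integrable_kernel_prod hL hf).bdd_mul
      (hK.comp (measurable_const.sub measurable_fst)).aestronglyMeasurable
      (ae_of_all _ fun p => hKb (x - p.1))
  have translate : ∀ z, ∫ y, K (x - y) * L (y - z) = conv d K L (x - z) := fun z => by
    rw [conv, ← integral_add_right_eq_self _ z]
    simp only [add_sub_cancel_right, sub_add_eq_sub_sub_swap]
  calc conv d K (conv d L f) x = ∫ y, ∫ z, K (x - y) * (L (y - z) * f z) := by
        simp only [conv, integral_const_mul]
    _ = ∫ z, ∫ y, K (x - y) * (L (y - z) * f z) := integral_integral_swap hF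
    _ = conv d (conv d K L) f x := by
        simp only [conv, ← mul_assoc, integral_mul_const, translate]

lemma integral_sq_conv (hK_even : ∀ z, K (-z) = K z) (hK : Measurable K)
    (hKb : ∀ z, ‖K z‖ ≤ C) (hK_int : Integrable K) (hf : Integrable f) :
    ∫ x, conv d K f x ^ 2 = ∫ x, f x * conv d (conv d K K) f x := by
  simp only [sq, integral_mul_conv_comm hK_even hK hKb (integrable_conv hK_int hf) hf,
    conv_conv hK hKb hK_int hf]

lemma integral_sub_mul_conv_sub (hK_even : ∀ z, K (-z) = K z) (hK : Measurable K)
    (hKb : ∀ z, ‖K z‖ ≤ C) (hK_int : Integrable K) (hφ : Integrable φ) (hf : Integrable f) :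
    ∫ x, (φ x - f x) * conv d K (fun y => φ y - f y) x
      = (∫ x, φ x * conv d K φ x) - 2 * (∫ x, φ x * conv d K f x) + ∫ x, f x * conv d K f x := by
  have hφφ := hφ.mul_conv hK_int hKb hφ
  have hφf := hφ.mul_conv hK_int hKb hf
  have hfφ := hf.mul_conv hK_int hKb hφ
  have hff := hf.mul_conv hK_int hKb hf
  simp only [conv_sub hK hKb hφ hf, sub_mul, mul_sub]
  rw [integral_sub, integral_sub hφφ hfφ, integral_sub hφf hff,
    ← integral_mul_conv_comm hK_even hK hKb hφ hf]
  · ring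
  exacts [hφφ.sub hfφ, hφf.sub hff]

end Convolution

section Gaussian

variable {d : ℕ} {t : ℝ}

local notation "E" => EuclideanSpace ℝ (Fin d)

lemma gauss_neg (z : E) : gauss d t (-z) = gauss d t z := by
  rw [gauss, gauss, norm_neg]

lemma continuous_gauss : Continuous (gauss d t) := by
  unfold gauss
  fun_prop

lemma norm_gauss_le (ht : 0 < t) (z : E) : ‖gauss d t z‖ ≤ (2 * Real.pi * t) ^ (-(d : ℝ) / 2) := by
  rw [gauss, Real.norm_of_nonneg (by positivity)]
  refine mul_le_of_le_one_right (by positivity) (Real.exp_le_one_iff.mpr ?_)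
  exact div_nonpos_of_nonpos_of_nonneg (neg_nonpos.mpr (by positivity)) (by positivity)

lemma integral_gauss (ht : 0 < t) : ∫ z, gauss d t z = 1 := by
  have hexp := GaussianFourier.integral_rexp_neg_mul_sq_norm (V := E) (b := 1 / (2 * t))
    (by positivity)
  simp only [finrank_euclideanSpace_fin] at hexp
  simp only [gauss, integral_const_mul, neg_div, div_eq_mul_one_div (‖_‖ ^ 2), mul_comm (‖_‖ ^ 2),
    ← neg_mul, hexp]
  rw [show Real.pi / (1 / (2 * t)) = 2 * Real.pi * t by field_simp, ← Real.rpow_add (by positivity)]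
  ring_nf
  exact Real.rpow_zero _

lemma integrable_gauss (ht : 0 < t) : Integrable (gauss d t) :=
  .of_integral_ne_zero (by rw [integral_gauss ht]; exact one_ne_zero)

lemma norm_sub_sq_add_norm_sq {F : Type*} [NormedAddCommGroup F] [InnerProductSpace ℝ F] (a x : F) :
    ‖a - x‖ ^ 2 + ‖x‖ ^ 2 = 2 * ‖x - (2 : ℝ)⁻¹ • a‖ ^ 2 + ‖a‖ ^ 2 / 2 := by
  rw [norm_sub_rev, norm_sub_sq_real, norm_sub_sq_real, norm_smul, inner_smul_right]
  norm_num
  ring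

lemma gauss_mul_gauss (ht : 0 < t) (a x : E) :
    gauss d t (a - x) * gauss d t x = gauss d (2 * t) a * gauss d (t / 2) (x - (2 : ℝ)⁻¹ • a) := by
  have hconst : (2 * Real.pi * t) * (2 * Real.pi * t)
      = (2 * Real.pi * (2 * t)) * (2 * Real.pi * (t / 2)) := by ring
  have hexp : -‖a - x‖ ^ 2 / (2 * t) + -‖x‖ ^ 2 / (2 * t)
      = -‖a‖ ^ 2 / (2 * (2 * t)) + -‖x - (2 : ℝ)⁻¹ • a‖ ^ 2 / (2 * (t / 2)) := by
    rw [← add_div, ← neg_add, norm_sub_sq_add_norm_sq]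
    field_simp
    ring
  calc gauss d t (a - x) * gauss d t x
      = ((2 * Real.pi * t) * (2 * Real.pi * t)) ^ (-(d : ℝ) / 2)
          * Real.exp (-‖a - x‖ ^ 2 / (2 * t) + -‖x‖ ^ 2 / (2 * t)) := by
        rw [Real.mul_rpow (by positivity) (by positivity), Real.exp_add, gauss, gauss]
        ring
    _ = _ := by
        rw [hconst, hexp, Real.mul_rpow (by positivity) (by positivity), Real.exp_add, gauss, gauss]
        ring

lemma conv_gauss_gauss (ht : 0 < t) : conv d (gauss d t) (gauss d t) = gauss d (2 * t) := by
  ext a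
  simp only [conv, gauss_mul_gauss ht, integral_const_mul]
  rw [integral_sub_right_eq_self (fun x => gauss d (t / 2) x), integral_gauss (by positivity),
    mul_one]

end Gaussian

theorem stmt_6 (d : ℕ) (h : ℝ) (hh : 0 < h)
    (u χ : EuclideanSpace ℝ (Fin d) → ℝ)
    (hu_int : Integrable u) (hχ_int : Integrable χ) :
    (∫ x, (conv d (gauss d (h / 2)) (fun y => u y - χ y) x) ^ 2)
      + ((∫ x, u x) - ∫ x, u x * conv d (gauss d h) u x)
    = (∫ x, u x * (1 - 2 * conv d (gauss d h) χ x))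
      + ∫ x, χ x * conv d (gauss d h) χ x := by
  have hh2 : 0 < h / 2 := half_pos hh
  have hsq : ∫ x, (conv d (gauss d (h / 2)) (fun y => u y - χ y) x) ^ 2
      = ∫ x, (u x - χ x) * conv d (gauss d h) (fun y => u y - χ y) x := by
    rw [integral_sq_conv (f := fun y => u y - χ y) gauss_neg continuous_gauss.measurable
      (norm_gauss_le hh2) (integrable_gauss hh2) (hu_int.sub hχ_int), conv_gauss_gauss hh2,
      mul_div_cancel₀ h two_ne_zero]
  have hlin : ∫ x, u x * (1 - 2 * conv d (gauss d h) χ x)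
      = (∫ x, u x) - 2 * ∫ x, u x * conv d (gauss d h) χ x := by
    simp only [mul_sub, mul_one, mul_left_comm _ (2 : ℝ)]
    have huχ := hu_int.mul_conv (integrable_gauss hh) (norm_gauss_le hh) hχ_int
    rw [integral_sub hu_int (huχ.const_mul 2), integral_const_mul]
  rw [hsq, hlin, integral_sub_mul_conv_sub gauss_neg continuous_gauss.measurable (norm_gauss_le hh)
    (integrable_gauss hh) hu_int hχ_int]
  ring
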